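/- Let r, n, m, q ∈ ℕ, A ∈ ℝ^{r×r}, E ∈ ℝ^{r×n}, H ∈ ℝ^{q×r}, J ∈ ℝ^{q×m}, K₀ ∈ ℝ^{m×r}, let S ∈ ℝ^{r×r} and P ∈ ℝ^{2n×2n} be symmetric positive definite, and let α > 0, ρ > 0. If the symmetric 3×3 block matrix with blocks [AᵀS + SA + ρS, α^{-1}SEG₀, (H + JK₀)ᵀ; α^{-1}G₀ᵀEᵀS, −ρP, 0; H + JK₀, 0, −I_q] is negative definite, then for every ζ ∈ ℝ^r and every x ∈ ℝ^{2n} with σ := G₀x ≠ 0 one has ζᵀ(AᵀS + SA)ζ + 2 ζᵀ S E σ + ‖(H + JK₀)ζ‖² < ρ (xᵀR(σ)PR(σ)x − ζᵀSζ). -/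

import Mathlib

/-!
Test the negative definite LMI against `(ζ, y, (H + JK₀)ζ)` with `y = (α / c(σ)) R(σ) x`.
Then `G₀ y = α σ`, so the coupling blocks `α⁻¹ S E G₀` contribute exactly `2 ζᵀ S E σ`, and the
output block contributes `+‖(H + JK₀)ζ‖²`. Since `0 < α < c(σ)`, the scale is below one, so
`ρ yᵀ P y ≤ ρ xᵀ R P R x`.
-/

open Matrix

noncomputable section

def enormVec {n : ℕ} (v : Fin n → ℝ) : ℝ := Real.sqrt (v ⬝ᵥ v)

def G0 (n : ℕ) : Matrix (Fin n) (Fin n ⊕ Fin n) ℝ := fromCols 1 0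

def cfun {n : ℕ} (α : ℝ) (σ : Fin n → ℝ) : ℝ := 1 / Real.sqrt (enormVec σ) + α

def Rmat {n : ℕ} (α : ℝ) (σ : Fin n → ℝ) : Matrix (Fin n ⊕ Fin n) (Fin n ⊕ Fin n) ℝ :=
  fromBlocks (cfun α σ • 1) 0 0 1

namespace Matrix

variable {k l p R : Type*} [Fintype k] [Fintype l] [Fintype p]

theorem sumElim_dotProduct_fromBlocks_mulVec_sumElim [NonUnitalNonAssocSemiring R]
    (M : Matrix k k R) (B : Matrix k l R) (C : Matrix l k R) (D : Matrix l l R)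
    (x : k → R) (y : l → R) :
    Sum.elim x y ⬝ᵥ (fromBlocks M B C D *ᵥ Sum.elim x y) =
      x ⬝ᵥ (M *ᵥ x) + x ⬝ᵥ (B *ᵥ y) + (y ⬝ᵥ (C *ᵥ x) + y ⬝ᵥ (D *ᵥ y)) := by
  simp only [fromBlocks_mulVec, Sum.elim_comp_inl, Sum.elim_comp_inr,
    sumElim_dotProduct_sumElim, dotProduct_add]

theorem dotProduct_fromBlocks_fromRows_fromCols_mulVec [CommRing R] [DecidableEq p]
    (M : Matrix k k R) (B : Matrix k l R) (D : Matrix l l R) (C : Matrix p k R)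
    (ζ : k → R) (y : l → R) :
    Sum.elim (Sum.elim ζ y) (C *ᵥ ζ) ⬝ᵥ
        (fromBlocks (fromBlocks M B Bᵀ D) (fromRows Cᵀ 0) (fromCols C 0) (-1) *ᵥ
          Sum.elim (Sum.elim ζ y) (C *ᵥ ζ)) =
      ζ ⬝ᵥ (M *ᵥ ζ) + 2 * (ζ ⬝ᵥ (B *ᵥ y)) + y ⬝ᵥ (D *ᵥ y) + (C *ᵥ ζ) ⬝ᵥ (C *ᵥ ζ) := by
  simp only [sumElim_dotProduct_fromBlocks_mulVec_sumElim, fromRows_mulVec, fromCols_mulVec,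
    Sum.elim_comp_inl, Sum.elim_comp_inr, dotProduct_transpose_mulVec, zero_mulVec,
    sumElim_dotProduct_sumElim, dotProduct_zero, neg_mulVec, one_mulVec, dotProduct_neg, add_zero]
  ring

theorem quadratic_lt_zero_of_posDef_neg_fromBlocks [CommRing R] [PartialOrder R]
    [IsOrderedAddMonoid R] [StarRing R] [TrivialStar R] [DecidableEq p]
    {M : Matrix k k R} {B : Matrix k l R} {D : Matrix l l R} {C : Matrix p k R}
    (h : (-(fromBlocks (fromBlocks M B Bᵀ D) (fromRows Cᵀ 0) (fromCols C 0) (-1))).PosDef)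
    (ζ : k → R) {y : l → R} (hy : y ≠ 0) :
    ζ ⬝ᵥ (M *ᵥ ζ) + 2 * (ζ ⬝ᵥ (B *ᵥ y)) + y ⬝ᵥ (D *ᵥ y) + (C *ᵥ ζ) ⬝ᵥ (C *ᵥ ζ) < 0 := by
  have hv : Sum.elim (Sum.elim ζ y) (C *ᵥ ζ) ≠ 0 := fun h0 =>
    hy (funext fun i => by simpa using congrFun h0 (Sum.inl (Sum.inr i)))
  simpa only [star_trivial, neg_mulVec, dotProduct_neg, neg_pos,
    dotProduct_fromBlocks_fromRows_fromCols_mulVec] using h.dotProduct_mulVec_pos hv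

theorem dotProduct_transpose_mul_mul_mulVec [CommSemiring R] (M : Matrix k l R)
    (P : Matrix k k R) (x : l → R) :
    x ⬝ᵥ ((Mᵀ * P * M) *ᵥ x) = (M *ᵥ x) ⬝ᵥ (P *ᵥ (M *ᵥ x)) := by
  rw [← mulVec_mulVec, ← mulVec_mulVec, dotProduct_transpose_mulVec, dotProduct_comm]

theorem PosSemidef.dotProduct_smul_mulVec_smul_le [CommRing R] [LinearOrder R]
    [IsStrictOrderedRing R] [StarRing R] [TrivialStar R] {P : Matrix k k R} (hP : P.PosSemidef)
    {t : R} (ht : |t| ≤ 1)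
    (u : k → R) : (t • u) ⬝ᵥ (P *ᵥ (t • u)) ≤ u ⬝ᵥ (P *ᵥ u) := by
  have hu : 0 ≤ u ⬝ᵥ (P *ᵥ u) := by simpa only [star_trivial] using hP.dotProduct_mulVec_nonneg u
  calc (t • u) ⬝ᵥ (P *ᵥ (t • u)) = t ^ 2 * (u ⬝ᵥ (P *ᵥ u)) := by
        simp only [mulVec_smul, smul_dotProduct, dotProduct_smul, smul_eq_mul]; ring
    _ ≤ u ⬝ᵥ (P *ᵥ u) := mul_le_of_le_one_left hu (sq_le_one_iff_abs_le_one t |>.mpr ht)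

end Matrix

theorem enormVec_sq {n : ℕ} (v : Fin n → ℝ) : enormVec v ^ 2 = v ⬝ᵥ v :=
  Real.sq_sqrt (dotProduct_self_star_nonneg v)

theorem G0_mulVec {n : ℕ} (w : Fin n ⊕ Fin n → ℝ) : G0 n *ᵥ w = w ∘ Sum.inl := by
  simp [G0]

theorem G0_mulVec_Rmat_mulVec {n : ℕ} (α : ℝ) (σ : Fin n → ℝ) (x : Fin n ⊕ Fin n → ℝ) :
    G0 n *ᵥ (Rmat α σ *ᵥ x) = cfun α σ • (G0 n *ᵥ x) := by
  simp [G0_mulVec, Rmat, fromBlocks_mulVec, smul_mulVec]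

theorem Rmat_transpose {n : ℕ} (α : ℝ) (σ : Fin n → ℝ) : (Rmat α σ)ᵀ = Rmat α σ := by
  simp [Rmat, fromBlocks_transpose]

theorem lt_cfun {n : ℕ} (α : ℝ) {σ : Fin n → ℝ} (hσ : σ ≠ 0) : α < cfun α σ :=
  lt_add_of_pos_left α <| one_div_pos.mpr <| Real.sqrt_pos.mpr <| Real.sqrt_pos.mpr <|
    dotProduct_self_star_pos_iff.mpr hσ

/-- LMI (58) of the paper and its consequence (61): `v̇ < ρ(V − v) − ξᵀξ` with
`ξ = (H + JK₀)ζ`. -/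
theorem stmt11 {r n m q : ℕ} (A : Matrix (Fin r) (Fin r) ℝ) (E : Matrix (Fin r) (Fin n) ℝ)
    (H : Matrix (Fin q) (Fin r) ℝ) (J : Matrix (Fin q) (Fin m) ℝ)
    (K0 : Matrix (Fin m) (Fin r) ℝ)
    (S : Matrix (Fin r) (Fin r) ℝ) (P : Matrix (Fin n ⊕ Fin n) (Fin n ⊕ Fin n) ℝ)
    (hS : S.PosDef) (hP : P.PosDef) (α ρ : ℝ) (hα : 0 < α) (hρ : 0 < ρ)
    (hLMI : (-(fromBlocks
        (fromBlocks (Aᵀ * S + S * A + ρ • S) (α⁻¹ • (S * E * G0 n))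
          (α⁻¹ • ((G0 n)ᵀ * Eᵀ * S)) (-(ρ • P)))
        (fromRows (H + J * K0)ᵀ 0)
        (fromCols (H + J * K0) 0)
        (-(1 : Matrix (Fin q) (Fin q) ℝ)))).PosDef) :
    ∀ (ζ : Fin r → ℝ) (x : Fin n ⊕ Fin n → ℝ), G0 n *ᵥ x ≠ 0 →
      ζ ⬝ᵥ ((Aᵀ * S + S * A) *ᵥ ζ) + 2 * (ζ ⬝ᵥ (S *ᵥ (E *ᵥ (G0 n *ᵥ x))))
        + enormVec ((H + J * K0) *ᵥ ζ) ^ 2 <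
      ρ * (x ⬝ᵥ ((Rmat α (G0 n *ᵥ x) * P * Rmat α (G0 n *ᵥ x)) *ᵥ x)
        - ζ ⬝ᵥ (S *ᵥ ζ)) := by
  intro ζ x hx
  set σ := G0 n *ᵥ x
  set C := H + J * K0
  have hc : α < cfun α σ := lt_cfun α hx
  have hc0 : 0 < cfun α σ := hα.trans hc
  set y := (α / cfun α σ) • (Rmat α σ *ᵥ x)
  have hGy : G0 n *ᵥ y = α • σ := by
    rw [mulVec_smul, G0_mulVec_Rmat_mulVec, smul_smul, div_mul_cancel₀ α hc0.ne']
  have hy : y ≠ 0 := fun h0 => by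
    rw [h0, mulVec_zero] at hGy
    exact hx (smul_eq_zero.mp hGy.symm |>.resolve_left hα.ne')
  have hyPy : y ⬝ᵥ (P *ᵥ y) ≤ x ⬝ᵥ ((Rmat α σ * P * Rmat α σ) *ᵥ x) := by
    have ht : |α / cfun α σ| ≤ 1 := by
      rw [abs_of_pos (div_pos hα hc0)]
      exact (div_le_one hc0).mpr hc.le
    have := hP.posSemidef.dotProduct_smul_mulVec_smul_le ht (Rmat α σ *ᵥ x)
    rwa [← dotProduct_transpose_mul_mul_mulVec, Rmat_transpose] at this
  have hB : α⁻¹ • ((G0 n)ᵀ * Eᵀ * S) = (α⁻¹ • (S * E * G0 n))ᵀ := by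
    have hSt : S.IsSymm := by simpa [conjTranspose_eq_transpose_of_trivial] using hS.1
    rw [transpose_smul, transpose_mul, transpose_mul, hSt.eq, Matrix.mul_assoc]
  have key := quadratic_lt_zero_of_posDef_neg_fromBlocks (hB ▸ hLMI) ζ hy
  simp only [add_mulVec, smul_mulVec, dotProduct_add, dotProduct_smul, neg_mulVec, dotProduct_neg,
    ← mulVec_mulVec, hGy, mulVec_smul, smul_eq_mul, inv_mul_cancel_left₀ hα.ne'] at key hyPy ⊢
  rw [enormVec_sq]
  linarith [mul_le_mul_of_nonneg_left hyPy hρ.le]
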